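/- If α and α' are both budget-feasible multiplier tuples for the bid-discount first-price auction, then their entrywise maximum max(α, α') is also budget-feasible. -/

import Mathlib

/-! Raising the rivals' multipliers while keeping one's own can only turn a win into a loss,
since every rival bid `αⱼ ṽⱼ(qⱼ)` is monotone in `αⱼ`. Hence buyer `i` pays at most as much under
`max(α, α')` as under whichever of `α`, `α'` attains `max(αᵢ, α'ᵢ)`, pointwise in `q` and so
after integration. -/

open MeasureTheory Set

/-- The box `[0,1]ⁿ` of quantile/parameter profiles. -/
def box (n : ℕ) : Set (Fin n → ℝ) := Set.univ.pi fun _ => Icc (0:ℝ) 1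

/-- Winning indicator of buyer `i` in the bid-discount first-price auction:
`Φᵢ(α,q) = 1` iff `αᵢ ṽᵢ(qᵢ) ≥ max(max_{j≠i} αⱼ ṽⱼ(qⱼ), λ)`. -/
noncomputable def Phi (n : ℕ) (v : Fin n → ℝ → ℝ) (lam : ℝ) (i : Fin n)
    (α q : Fin n → ℝ) : ℝ :=
  if max (⨆ j, if j = i then 0 else α j * v j (q j)) lam ≤ α i * v i (q i) then 1 else 0

/-- Expected payment of buyer `i` under parameter `α`:
`Pᵢ(α) = ∫_{[0,1]ⁿ} ṽᵢ(qᵢ) Φᵢ(α,q) dq`. -/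
noncomputable def payment (n : ℕ) (v : Fin n → ℝ → ℝ) (lam : ℝ) (i : Fin n)
    (α : Fin n → ℝ) : ℝ :=
  ∫ q in box n, v i (q i) * Phi n v lam i α q

theorem box_eq_Icc (n : ℕ) : box n = Icc 0 1 := pi_univ_Icc 0 1

theorem measurableSet_box {n : ℕ} : MeasurableSet (box n) :=
  box_eq_Icc n ▸ measurableSet_Icc

theorem Phi_nonneg (n : ℕ) (v : Fin n → ℝ → ℝ) (lam : ℝ) (i : Fin n) (δ q : Fin n → ℝ) :
    0 ≤ Phi n v lam i δ q := by
  unfold Phi; split_ifs <;> norm_num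

theorem Phi_le_one (n : ℕ) (v : Fin n → ℝ → ℝ) (lam : ℝ) (i : Fin n) (δ q : Fin n → ℝ) :
    Phi n v lam i δ q ≤ 1 := by
  unfold Phi; split_ifs <;> norm_num

theorem Phi_congr {n : ℕ} {v w : Fin n → ℝ → ℝ} {q : Fin n → ℝ} (h : ∀ j, v j (q j) = w j (q j))
    (lam : ℝ) (i : Fin n) (δ : Fin n → ℝ) : Phi n v lam i δ q = Phi n w lam i δ q := by
  simp only [Phi, h]

theorem measurable_Phi {n : ℕ} {v : Fin n → ℝ → ℝ} (hv : ∀ j, Measurable (v j))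
    (lam : ℝ) (i : Fin n) (δ : Fin n → ℝ) : Measurable (Phi n v lam i δ) := by
  have hbid : ∀ j, Measurable fun q : Fin n → ℝ => δ j * v j (q j) := by fun_prop
  have hrivals : ∀ j, Measurable fun q : Fin n → ℝ => if j = i then 0 else δ j * v j (q j) := by
    intro j
    split_ifs
    exacts [measurable_const, hbid j]
  exact Measurable.ite (measurableSet_le ((Measurable.iSup hrivals).max measurable_const) (hbid i))
    measurable_const measurable_const

theorem integrableOn_payment {n : ℕ} {v : Fin n → ℝ → ℝ}
    (hv : ∀ i, MonotoneOn (v i) (Icc (0:ℝ) 1))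
    (hvr : ∀ i, ∀ q ∈ Icc (0:ℝ) 1, v i q ∈ Icc (0:ℝ) 1) (lam : ℝ) (i : Fin n) (δ : Fin n → ℝ) :
    IntegrableOn (fun q => v i (q i) * Phi n v lam i δ q) (box n) := by
  -- `v j` need not be measurable off `[0,1]`, so pass to a monotone extension.
  choose w hw_mono hw_eq using fun j =>
    (hv j).exists_monotone_extension (bddBelow_Icc.mono (hv j).image_Icc_subset)
      (bddAbove_Icc.mono (hv j).image_Icc_subset)
  have hbox_eq : EqOn (fun q => w i (q i) * Phi n w lam i δ q)
      (fun q => v i (q i) * Phi n v lam i δ q) (box n) := fun q hq => by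
    have hvw : ∀ j, v j (q j) = w j (q j) := fun j => hw_eq j (hq j (mem_univ j))
    simp only [hvw, Phi_congr hvw]
  have hw_meas : Measurable fun q => w i (q i) * Phi n w lam i δ q :=
    ((hw_mono i).measurable.comp (measurable_pi_apply i)).mul
      (measurable_Phi (fun j => (hw_mono j).measurable) lam i δ)
  refine (Measure.integrableOn_of_bounded (M := 1) ?_ hw_meas.aestronglyMeasurable ?_).congr_fun
    hbox_eq measurableSet_box
  · rw [box_eq_Icc]; exact measure_Icc_lt_top.ne
  · refine (ae_restrict_mem measurableSet_box).mono fun q hq => ?_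
    rw [show w i (q i) * Phi n w lam i δ q = _ from hbox_eq hq]
    obtain ⟨hv0, hv1⟩ := hvr i (q i) (hq i (mem_univ i))
    have hΦ0 := Phi_nonneg n v lam i δ q
    rw [Real.norm_of_nonneg (mul_nonneg hv0 hΦ0)]
    exact mul_le_one₀ hv1 hΦ0 (Phi_le_one n v lam i δ q)

theorem Phi_le_Phi {n : ℕ} {v : Fin n → ℝ → ℝ} {lam : ℝ} {i : Fin n} {β γ q : Fin n → ℝ}
    (hv : ∀ j, 0 ≤ v j (q j)) (hrivals : ∀ j, j ≠ i → γ j ≤ β j) (hown : β i ≤ γ i) :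
    Phi n v lam i β q ≤ Phi n v lam i γ q := by
  unfold Phi
  split_ifs with hβ hγ
  · exact le_rfl
  · refine absurd ?_ hγ
    calc max (⨆ j, if j = i then 0 else γ j * v j (q j)) lam
        ≤ max (⨆ j, if j = i then 0 else β j * v j (q j)) lam := by
          refine max_le_max (ciSup_mono (finite_range _).bddAbove fun j => ?_) le_rfl
          split_ifs with hj
          exacts [le_rfl, mul_le_mul_of_nonneg_right (hrivals j hj) (hv j)]
      _ ≤ β i * v i (q i) := hβ
      _ ≤ γ i * v i (q i) := mul_le_mul_of_nonneg_right hown (hv i)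
  · exact zero_le_one
  · exact le_rfl

theorem payment_le_payment {n : ℕ} {v : Fin n → ℝ → ℝ}
    (hv : ∀ i, MonotoneOn (v i) (Icc (0:ℝ) 1))
    (hvr : ∀ i, ∀ q ∈ Icc (0:ℝ) 1, v i q ∈ Icc (0:ℝ) 1) (lam : ℝ) {i : Fin n}
    {β γ : Fin n → ℝ} (hrivals : ∀ j, j ≠ i → γ j ≤ β j) (hown : β i ≤ γ i) :
    payment n v lam i β ≤ payment n v lam i γ := by
  refine setIntegral_mono_on (integrableOn_payment hv hvr lam i β)
    (integrableOn_payment hv hvr lam i γ) measurableSet_box fun q hq => ?_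
  have hv_nonneg : ∀ j, 0 ≤ v j (q j) := fun j => (hvr j (q j) (hq j (mem_univ j))).1
  exact mul_le_mul_of_nonneg_left (Phi_le_Phi hv_nonneg hrivals hown) (hv_nonneg i)

theorem budget_feasible_max_general (n : ℕ) (v : Fin n → ℝ → ℝ) (lam : ℝ) (ρ : Fin n → ℝ)
    (hv : ∀ i, MonotoneOn (v i) (Icc (0:ℝ) 1))
    (hvr : ∀ i, ∀ q ∈ Icc (0:ℝ) 1, v i q ∈ Icc (0:ℝ) 1)
    (α α' : Fin n → ℝ) (hα : α ∈ box n) (hα' : α' ∈ box n)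
    (hfeas : ∀ i, payment n v lam i α ≤ ρ i)
    (hfeas' : ∀ i, payment n v lam i α' ≤ ρ i) :
    (fun i => max (α i) (α' i)) ∈ box n ∧
      ∀ i, payment n v lam i (fun i => max (α i) (α' i)) ≤ ρ i := by
  refine ⟨fun i _ => ⟨(hα i (mem_univ i)).1.trans (le_max_left _ _),
    max_le (hα i (mem_univ i)).2 (hα' i (mem_univ i)).2⟩, fun i => ?_⟩
  rcases max_choice (α i) (α' i) with h | h
  · exact (payment_le_payment hv hvr lam (fun j _ => le_max_left _ _) h.le).trans (hfeas i)
  · exact (payment_le_payment hv hvr lam (fun j _ => le_max_right _ _) h.le).trans (hfeas' i)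

/-- If `α` and `α'` are both budget-feasible multiplier tuples for the bid-discount
first-price auction, then their entrywise maximum is also budget-feasible. -/
theorem budget_feasible_max (n : ℕ) (v : Fin n → ℝ → ℝ) (lam : ℝ) (ρ : Fin n → ℝ)
    (hv : ∀ i, MonotoneOn (v i) (Icc (0:ℝ) 1))
    (hvr : ∀ i, ∀ q ∈ Icc (0:ℝ) 1, v i q ∈ Icc (0:ℝ) 1)
    (hlam : 0 < lam) (hρ : ∀ i, 0 < ρ i)
    (α α' : Fin n → ℝ) (hα : α ∈ box n) (hα' : α' ∈ box n)
    (hfeas : ∀ i, payment n v lam i α ≤ ρ i)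
    (hfeas' : ∀ i, payment n v lam i α' ≤ ρ i) :
    (fun i => max (α i) (α' i)) ∈ box n ∧
      ∀ i, payment n v lam i (fun i => max (α i) (α' i)) ≤ ρ i :=
  budget_feasible_max_general n v lam ρ hv hvr α α' hα hα' hfeas hfeas'
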